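/- Let K be a real symmetric positive semidefinite n×n matrix, λ > 0, and σ_cutoff > 0. Suppose d ∈ ℝⁿ lies in the span of eigenvectors of K whose eigenvalues are at least σ_cutoff. Then ‖(I − K(K + nλ I)^{-1}) d‖ ≤ (nλ/(nλ + σ_cutoff)) · ‖d‖, where ‖·‖ is the Euclidean norm. -/

import Mathlib

/-!
With `μ = nλ`, the residual operator `1 - K (K + μ)⁻¹` equals `μ (K + μ)⁻¹`, which scales an
eigenvector of `K` with eigenvalue `σ` by `μ / (σ + μ)`. A band-limited `d` is orthogonal to
every eigenvector with eigenvalue below the cut-off, so in an orthonormal eigenbasis of `K`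
each nonzero coordinate of `d` is scaled by at most `μ / (μ + σ_cutoff)`, and Parseval's
identity turns this coordinatewise bound into the norm bound.
-/

noncomputable def euclNorm {n : ℕ} (v : Fin n → ℝ) : ℝ :=
  Real.sqrt (∑ i, (v i) ^ 2)

open Matrix

theorem euclNorm_eq_norm_toLp {n : ℕ} (v : Fin n → ℝ) : euclNorm v = ‖WithLp.toLp 2 v‖ := by
  simp [euclNorm, EuclideanSpace.norm_eq]

theorem OrthonormalBasis.norm_le_mul_norm_of_forall_norm_inner_le {ι 𝕜 E : Type*} [Fintype ι]
    [RCLike 𝕜] [NormedAddCommGroup E] [InnerProductSpace 𝕜 E] (b : OrthonormalBasis ι 𝕜 E)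
    {x y : E} {r : ℝ} (hr : 0 ≤ r) (h : ∀ i, ‖inner 𝕜 (b i) x‖ ≤ r * ‖inner 𝕜 (b i) y‖) :
    ‖x‖ ≤ r * ‖y‖ := by
  refine le_of_pow_le_pow_left₀ two_ne_zero (by positivity) ?_
  calc ‖x‖ ^ 2 = ∑ i, ‖inner 𝕜 (b i) x‖ ^ 2 := (b.sum_sq_norm_inner_right x).symm
    _ ≤ ∑ i, (r * ‖inner 𝕜 (b i) y‖) ^ 2 :=
      Finset.sum_le_sum fun i _ => pow_le_pow_left₀ (norm_nonneg _) (h i) 2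
    _ = (r * ‖y‖) ^ 2 := by
      simp_rw [mul_pow, ← Finset.mul_sum, b.sum_sq_norm_inner_right]

namespace Matrix

variable {m α : Type*} [Fintype m] [DecidableEq m]

theorem one_sub_mul_inv_add_smul_one [CommRing α] (K : Matrix m m α) (μ : α)
    (h : IsUnit (K + μ • 1).det) : 1 - K * (K + μ • 1)⁻¹ = μ • (K + μ • 1)⁻¹ := by
  calc 1 - K * (K + μ • 1)⁻¹ = (K + μ • 1 - K) * (K + μ • 1)⁻¹ := by
        rw [sub_mul, mul_nonsing_inv _ h]
    _ = μ • (K + μ • 1)⁻¹ := by rw [add_sub_cancel_left, smul_mul, one_mul]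

theorem inv_mulVec_eq_inv_smul [Field α] {A : Matrix m m α} (hA : IsUnit A.det) {v : m → α}
    {a : α} (hv : A *ᵥ v = a • v) : A⁻¹ *ᵥ v = a⁻¹ • v := by
  have hv' : v = a • A⁻¹ *ᵥ v := by
    rw [← mulVec_smul, ← hv, mulVec_mulVec, nonsing_inv_mul _ hA, one_mulVec]
  rcases eq_or_ne a 0 with rfl | ha
  · rw [zero_smul] at hv'
    rw [hv', mulVec_zero, smul_zero]
  · conv_rhs => rw [hv', inv_smul_smul₀ ha]

end Matrix

namespace Matrix.IsHermitian

variable {m : Type*} [Fintype m] {M : Matrix m m ℝ} {u v : m → ℝ} {a c : ℝ}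

theorem mulVec_dotProduct_of_mulVec_eq_smul (hM : M.IsHermitian) (hu : M *ᵥ u = a • u)
    (v : m → ℝ) : M *ᵥ v ⬝ᵥ u = a * (v ⬝ᵥ u) := by
  have hMT : Mᵀ = M := by rw [← conjTranspose_eq_transpose_of_trivial, hM.eq]
  rw [dotProduct_comm, dotProduct_mulVec, ← mulVec_transpose, hMT, hu, smul_dotProduct,
    smul_eq_mul, dotProduct_comm]

theorem dotProduct_eq_zero_of_mem_span_eigenvectors_ge (hM : M.IsHermitian)
    (hu : M *ᵥ u = a • u) (hac : a < c)
    (hv : v ∈ Submodule.span ℝ {w | ∃ σ : ℝ, c ≤ σ ∧ M *ᵥ w = σ • w}) : v ⬝ᵥ u = 0 := by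
  induction hv using Submodule.span_induction with
  | mem w hw =>
    obtain ⟨σ, hσ, hw⟩ := hw
    have h := hM.mulVec_dotProduct_of_mulVec_eq_smul hu w
    rw [hw, smul_dotProduct, smul_eq_mul] at h
    by_contra hwu
    exact (hac.trans_le hσ).ne' (mul_right_cancel₀ hwu h)
  | zero => exact zero_dotProduct u
  | add x y _ _ hx hy => rw [add_dotProduct, hx, hy, add_zero]
  | smul t x _ hx => rw [smul_dotProduct, hx, smul_zero]

end Matrix.IsHermitian

/-- Spectrally band-limited residuals (Corollary `spectrally_bandlim_res`):
if `K` is symmetric positive semidefinite, `λ > 0`, and `d` lies in the span of the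
eigenvectors of `K` with eigenvalue at least `σ_cutoff > 0`, then
`‖(I - K (K + nλI)⁻¹) d‖ ≤ (nλ / (nλ + σ_cutoff)) ‖d‖`. -/
theorem bandlimited_residual_contraction {n : ℕ} (K : Matrix (Fin n) (Fin n) ℝ)
    (hpsd : K.PosSemidef) (lam : ℝ) (hlam : 0 < lam)
    (σcut : ℝ) (hσcut : 0 < σcut)
    (d : Fin n → ℝ)
    (hd : d ∈ Submodule.span ℝ
      {v : Fin n → ℝ | ∃ σ : ℝ, σcut ≤ σ ∧ K.mulVec v = σ • v}) :
    euclNorm ((1 - K * (K + ((n : ℝ) * lam) • 1)⁻¹).mulVec d) ≤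
      ((n : ℝ) * lam / ((n : ℝ) * lam + σcut)) * euclNorm d := by
  set μ := (n : ℝ) * lam
  set b := hpsd.isHermitian.eigenvectorBasis
  set eig := hpsd.isHermitian.eigenvalues
  rw [euclNorm_eq_norm_toLp, euclNorm_eq_norm_toLp]
  refine b.norm_le_mul_norm_of_forall_norm_inner_le (by positivity) fun i => ?_
  have hμ : 0 < μ := mul_pos (Nat.cast_pos.2 i.pos) hlam
  have hA : (K + μ • 1).PosDef := PosDef.posSemidef_add hpsd (PosDef.one.smul hμ)
  have hdet : IsUnit (K + μ • 1).det := hA.det_pos.ne'.isUnit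
  have hinv : (K + μ • 1)⁻¹ *ᵥ b i = (eig i + μ)⁻¹ • b i := by
    refine inv_mulVec_eq_inv_smul hdet ?_
    rw [add_mulVec, hpsd.isHermitian.mulVec_eigenvectorBasis, smul_mulVec, one_mulVec, add_smul]
  have hcoeff : (1 - K * (K + μ • 1)⁻¹) *ᵥ d ⬝ᵥ b i = μ / (eig i + μ) * (d ⬝ᵥ b i) := by
    rw [one_sub_mul_inv_add_smul_one K μ hdet, smul_mulVec, smul_dotProduct,
      hA.isHermitian.inv.mulVec_dotProduct_of_mulVec_eq_smul hinv]
    ring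
  simp only [EuclideanSpace.inner_eq_star_dotProduct, star_trivial, Real.norm_eq_abs, hcoeff]
  rcases eq_or_ne (d ⬝ᵥ b i) 0 with hzero | hnz
  · simp [hzero]
  have hcut : σcut ≤ eig i := not_lt.1 fun hlt => hnz <|
    hpsd.isHermitian.dotProduct_eq_zero_of_mem_span_eigenvectors_ge
      (hpsd.isHermitian.mulVec_eigenvectorBasis i) hlt hd
  rw [abs_mul, abs_of_pos (div_pos hμ (by linarith))]
  gcongr μ / ?_ * _
  linarith
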